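/- The entropy of a product with a Euclidean factor equals the entropy of the factor: let k, m be natural numbers, let ν be a σ-finite Borel measure on a finite-dimensional Euclidean space E₁, and let vol_m denote Lebesgue measure on ℝ^m. Then λ^{(k+m)}(ν ⊗ vol_m) = λ^{(k)}(ν), where the left-hand entropy is the supremum of F^{(k+m)}_{x₀,t₀}(ν ⊗ vol_m) over x₀ ∈ E₁ × ℝ^m and t₀ > 0, and the right-hand entropy is the supremum of F^{(k)}_{a,t₀}(ν) over a ∈ E₁ and t₀ > 0. -/

import Mathlib

open MeasureTheory Real ENNReal

/-- The `F`-functional with dimension parameter `n` of a Borel measure `μ` on a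
finite-dimensional Euclidean space `E`:
`F^{(n)}_{x₀,t₀}(μ) = (4π t₀)^{-n/2} ∫_E exp(-‖x-x₀‖²/(4t₀)) dμ(x)`. -/
noncomputable def Fmeas (n : ℕ) {E : Type*} [NormedAddCommGroup E] [InnerProductSpace ℝ E]
    [MeasurableSpace E] (μ : Measure E) (x₀ : E) (t₀ : ℝ) : ℝ≥0∞ :=
  ENNReal.ofReal ((4 * Real.pi * t₀) ^ (-(n : ℝ) / 2)) *
    ∫⁻ x, ENNReal.ofReal (Real.exp (-‖x - x₀‖ ^ 2 / (4 * t₀))) ∂μ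

/-- The entropy `λ^{(n)}(μ) = sup { F^{(n)}_{x₀,t₀}(μ) : x₀ ∈ E, t₀ > 0 }`. -/
noncomputable def entropyMeas (n : ℕ) {E : Type*} [NormedAddCommGroup E]
    [InnerProductSpace ℝ E] [MeasurableSpace E] (μ : Measure E) : ℝ≥0∞ :=
  ⨆ (x₀ : E) (t₀ : ℝ) (_ : 0 < t₀), Fmeas n μ x₀ t₀

variable {E₁ : Type*} [NormedAddCommGroup E₁] [InnerProductSpace ℝ E₁]
  [FiniteDimensional ℝ E₁] [MeasurableSpace E₁] [BorelSpace E₁]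

/-- The Euclidean product `E₁ × ℝ^m`: the product equipped with the `ℓ²`-product norm,
so that `‖(z,x)‖² = ‖z‖² + ‖x‖²`. -/
abbrev EuclideanProd (E₁ : Type*) [NormedAddCommGroup E₁] [InnerProductSpace ℝ E₁] (m : ℕ) :=
  WithLp 2 (E₁ × EuclideanSpace ℝ (Fin m))

/-- As a measurable space, the Euclidean product `E₁ × ℝ^m` is just the product of the
measurable spaces of the factors. -/
noncomputable instance (m : ℕ) : MeasurableSpace (EuclideanProd E₁ m) :=
  (inferInstance : MeasurableSpace (E₁ × EuclideanSpace ℝ (Fin m))).comap (WithLp.ofLp (p := 2))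

/-!
On the `ℓ²` product the Gaussian weight `exp(-‖(y,z) - (a,b)‖²/4t)` factors into Gaussian
weights on the two factors, so by Tonelli `F^{(k+m)}_{(a,b),t}(ν ⊗ vol_m)` is `F^{(k)}_{a,t}(ν)`
times `(4πt)^{-m/2} ∫ exp(-‖z - b‖²/4t) dz = 1`. The two entropies are therefore suprema of the
same values, as every `a` is the first coordinate of some centre `(a,b)`.
-/

section GaussWeight

variable {E F : Type*} [NormedAddCommGroup E] [NormedAddCommGroup F]

noncomputable def gaussWeight (x₀ : E) (t : ℝ) (x : E) : ℝ≥0∞ :=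
  ENNReal.ofReal (rexp (-‖x - x₀‖ ^ 2 / (4 * t)))

lemma gaussWeight_sub_right (x₀ : E) (t : ℝ) (x : E) :
    gaussWeight x₀ t x = gaussWeight 0 t (x - x₀) := by
  simp [gaussWeight]

lemma gaussWeight_toLp_prod (x₀ : WithLp 2 (E × F)) (t : ℝ) (p : E × F) :
    gaussWeight x₀ t (WithLp.toLp 2 p) = gaussWeight x₀.fst t p.1 * gaussWeight x₀.snd t p.2 := by
  rw [gaussWeight, gaussWeight, gaussWeight, ← ENNReal.ofReal_mul (exp_pos _).le, ← exp_add,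
    WithLp.prod_norm_sq_eq_of_L2, WithLp.sub_fst, WithLp.sub_snd, WithLp.toLp_fst,
    WithLp.toLp_snd]
  ring_nf

variable [MeasurableSpace E] [MeasurableSpace F] [BorelSpace E] [BorelSpace F]

lemma lintegral_gaussWeight_prod (μ : Measure E) (ν : Measure F) [SFinite ν]
    (x₀ : WithLp 2 (E × F)) (t : ℝ) :
    ∫⁻ x, gaussWeight x₀ t x ∂((μ.prod ν).map (WithLp.toLp 2)) =
      (∫⁻ y, gaussWeight x₀.fst t y ∂μ) * ∫⁻ z, gaussWeight x₀.snd t z ∂ν := by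
  rw [← MeasurableEquiv.coe_toLp, lintegral_map_equiv]
  simp only [MeasurableEquiv.toLp_apply, gaussWeight_toLp_prod]
  exact lintegral_prod_mul (by unfold gaussWeight; fun_prop) (by unfold gaussWeight; fun_prop)

variable [InnerProductSpace ℝ E] [InnerProductSpace ℝ F] [FiniteDimensional ℝ F]

omit [BorelSpace E] in
lemma Fmeas_eq_mul_lintegral_gaussWeight (n : ℕ) (μ : Measure E) (x₀ : E) (t : ℝ) :
    Fmeas n μ x₀ t = ENNReal.ofReal ((4 * π * t) ^ (-(n : ℝ) / 2)) * ∫⁻ x, gaussWeight x₀ t x ∂μ :=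
  rfl

lemma lintegral_gaussWeight_volume (x₀ : F) {t : ℝ} (ht : 0 < t) :
    ∫⁻ x, gaussWeight x₀ t x = ENNReal.ofReal ((4 * π * t) ^ ((Module.finrank ℝ F : ℝ) / 2)) := by
  have hb : 0 < (4 * t)⁻¹ := by positivity
  have hweight : ∀ x : F, gaussWeight 0 t x = ENNReal.ofReal (rexp (-(4 * t)⁻¹ * ‖x‖ ^ 2)) := by
    intro x
    simp only [gaussWeight, sub_zero]
    congr 2
    field_simp
  have hintegral := GaussianFourier.integral_rexp_neg_mul_sq_norm (V := F) hb
  rw [show π / (4 * t)⁻¹ = 4 * π * t by field_simp] at hintegral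
  -- a non-integrable function has Bochner integral `0`
  have hint : Integrable (fun x : F => rexp (-(4 * t)⁻¹ * ‖x‖ ^ 2)) :=
    .of_integral_ne_zero (by rw [hintegral]; positivity)
  simp_rw [gaussWeight_sub_right x₀, lintegral_sub_right_eq_self (gaussWeight 0 t) x₀, hweight,
    ← ofReal_integral_eq_lintegral_ofReal hint (.of_forall fun x => (exp_pos _).le), hintegral]

lemma Fmeas_map_toLp_prod_volume (k : ℕ) (μ : Measure E) (x₀ : WithLp 2 (E × F)) {t : ℝ}
    (ht : 0 < t) :
    Fmeas (k + Module.finrank ℝ F) ((μ.prod (volume : Measure F)).map (WithLp.toLp 2)) x₀ t =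
      Fmeas k μ x₀.fst t := by
  have h4πt : 0 < 4 * π * t := by positivity
  rw [Fmeas_eq_mul_lintegral_gaussWeight, Fmeas_eq_mul_lintegral_gaussWeight,
    lintegral_gaussWeight_prod, lintegral_gaussWeight_volume _ ht, mul_comm (∫⁻ _, _ ∂μ),
    ← mul_assoc, ← ENNReal.ofReal_mul (by positivity), ← rpow_add h4πt]
  congr 3
  push_cast
  ring

lemma entropyMeas_map_toLp_prod_volume (k : ℕ) (μ : Measure E) :
    entropyMeas (k + Module.finrank ℝ F) ((μ.prod (volume : Measure F)).map (WithLp.toLp 2)) =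
      entropyMeas k μ := by
  have hfst : Function.Surjective (fun x₀ : WithLp 2 (E × F) => x₀.fst) :=
    fun a => ⟨WithLp.toLp 2 (a, 0), rfl⟩
  calc entropyMeas (k + Module.finrank ℝ F) ((μ.prod (volume : Measure F)).map (WithLp.toLp 2))
      = ⨆ (x₀ : WithLp 2 (E × F)) (t : ℝ) (_ : 0 < t), Fmeas k μ x₀.fst t :=
        iSup_congr fun x₀ => iSup_congr fun t => iSup_congr fun ht =>
          Fmeas_map_toLp_prod_volume k μ x₀ ht
    _ = entropyMeas k μ := hfst.iSup_comp fun a => ⨆ (t : ℝ) (_ : 0 < t), Fmeas k μ a t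

end GaussWeight

/-- The entropy of a product with a Euclidean factor equals the entropy of the factor:
`λ^{(k+m)}(ν ⊗ vol_m) = λ^{(k)}(ν)`. -/
theorem entropy_product (k m : ℕ) (ν : Measure E₁) [SigmaFinite ν] :
    @entropyMeas (k + m) (EuclideanProd E₁ m) _ _ _
        ((ν.prod (volume : Measure (EuclideanSpace ℝ (Fin m)))).map (WithLp.toLp 2)) =
      entropyMeas k ν := by
  simpa using entropyMeas_map_toLp_prod_volume (F := EuclideanSpace ℝ (Fin m)) k ν
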